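/- arXiv:2506.14479 — 2 statements merged into one kernel-verified Lean document; each statement's English description precedes it below -/
import Mathlib

section
/- Let A and V be real symmetric matrices with V positive definite and A positive semidefinite, and suppose V^{-1/2}(A + I_d)V^{-1/2} ⪰ (1/4) I_d and λ_min(V) ≥ 4. Then the spectral norm of P := V^{-1/2}(V - A)(A + I_d)^{-1} V^{1/2} satisfies ‖P‖₂ ≤ 5. -/
/-!
Put `S = V^{1/2}` and `M = S (A + I)⁻¹ S`. Then `M` is the inverse of `S⁻¹ (A + I) S⁻¹ ⪰ I/4`,
so by the continuous functional calculus its spectrum lies in `(0, 4]`, whence `‖M‖ ≤ 4` and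
`‖M - I‖ ≤ 3`; likewise `V ⪰ 4I` gives `‖V⁻¹‖ ≤ 1/4`. Since `P = (M - I) + V⁻¹ M`, the triangle
inequality gives `‖P‖₂ ≤ 3 + 1 ≤ 5`.
-/

open Matrix

/-- The square root of a positive semidefinite matrix, as defined in the older Mathlib
(removed since). -/
noncomputable def Matrix.PosSemidef.sqrt {n 𝕜 : Type*} [Fintype n] [RCLike 𝕜] [PartialOrder 𝕜]
    [StarOrderedRing 𝕜] [DecidableEq n]
    {A : Matrix n n 𝕜} (hA : A.PosSemidef) : Matrix n n 𝕜 :=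
  hA.1.eigenvectorUnitary.1 * diagonal ((↑) ∘ (Real.sqrt ∘ hA.1.eigenvalues)) *
  (star hA.1.eigenvectorUnitary : Matrix n n 𝕜)

theorem Matrix.PosSemidef.sqrt_mul_self {n : Type*} [Fintype n] [DecidableEq n]
    {A : Matrix n n ℝ} (hA : A.PosSemidef) : hA.sqrt * hA.sqrt = A := by
  set U : Matrix n n ℝ := hA.1.eigenvectorUnitary.1
  set D : Matrix n n ℝ := diagonal ((↑) ∘ (Real.sqrt ∘ hA.1.eigenvalues))
  have hU : star U * U = 1 := Unitary.star_mul_self_of_mem hA.1.eigenvectorUnitary.2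
  have hD : D * D = diagonal ((↑) ∘ hA.1.eigenvalues) := by
    simp [D, diagonal_mul_diagonal, Real.mul_self_sqrt (hA.eigenvalues_nonneg _)]
  calc hA.sqrt * hA.sqrt = U * D * (star U * U) * D * star U := by
        simp only [Matrix.PosSemidef.sqrt, U, D, mul_assoc]
        rfl
    _ = U * diagonal ((↑) ∘ hA.1.eigenvalues) * star U := by rw [hU, mul_one, mul_assoc U, hD]
    _ = A := by
        conv_rhs => rw [hA.1.spectral_theorem]
        rfl

section CFC

variable {A : Type*} [NormedRing A] [StarRing A] [NormedAlgebra ℝ A] [StarModule ℝ A]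
  [IsometricContinuousFunctionalCalculus ℝ A IsSelfAdjoint] [PartialOrder A] [StarOrderedRing A]
  [NonnegSpectrumClass ℝ A] {b : A} {c : ℝ}

lemma norm_cfc_le_of_algebraMap_le {r : ℝ} (f : ℝ → ℝ) (hr : 0 ≤ r)
    (hcb : algebraMap ℝ A c ≤ b) (hf : ∀ x, c ≤ x → |f x| ≤ r) : ‖cfc f b‖ ≤ r := by
  have hb := (IsSelfAdjoint.iff_of_le hcb).mp (.algebraMap A (.all c))
  rw [algebraMap_le_iff_le_spectrum] at hcb
  exact norm_cfc_le hr fun x hx => hf x (hcb x hx)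

lemma cfc_inv_eq_ringInverse_of_algebraMap_le (hc : 0 < c) (hcb : algebraMap ℝ A c ≤ b) :
    cfc (fun x : ℝ => x⁻¹) b = Ring.inverse b := by
  have hb := (IsSelfAdjoint.iff_of_le hcb).mp (.algebraMap A (.all c))
  rw [algebraMap_le_iff_le_spectrum] at hcb
  simpa [cfc_id ℝ b] using cfc_inv id b fun x hx => (hc.trans_le (hcb x hx)).ne'

lemma norm_ringInverse_le_of_algebraMap_le (hc : 0 < c) (hcb : algebraMap ℝ A c ≤ b) :
    ‖Ring.inverse b‖ ≤ c⁻¹ := by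
  rw [← cfc_inv_eq_ringInverse_of_algebraMap_le hc hcb]
  refine norm_cfc_le_of_algebraMap_le _ (inv_nonneg.mpr hc.le) hcb fun x hx => ?_
  rw [abs_of_pos (inv_pos.mpr (hc.trans_le hx))]
  exact inv_anti₀ hc hx

lemma norm_ringInverse_sub_one_le_of_algebraMap_le (hc : 0 < c) (hcb : algebraMap ℝ A c ≤ b) :
    ‖Ring.inverse b - 1‖ ≤ max (c⁻¹ - 1) 1 := by
  have hb := (IsSelfAdjoint.iff_of_le hcb).mp (.algebraMap A (.all c))
  have hspec := (algebraMap_le_iff_le_spectrum (a := b)).mp hcb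
  have hcont : ContinuousOn (fun x : ℝ => x⁻¹) (spectrum ℝ b) :=
    continuousOn_inv₀.mono fun x hx => (hc.trans_le (hspec x hx)).ne'
  rw [← cfc_inv_eq_ringInverse_of_algebraMap_le hc hcb, ← cfc_const_one ℝ b, ← cfc_sub _ _ b]
  refine norm_cfc_le_of_algebraMap_le _ (le_max_of_le_right zero_le_one) hcb fun x hx => ?_
  have hx₀ := inv_pos.mpr (hc.trans_le hx)
  rw [abs_le]
  exact ⟨by linarith [le_max_right (c⁻¹ - 1) 1],
    by linarith [le_max_left (c⁻¹ - 1) 1, inv_anti₀ hc hx]⟩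

end CFC

namespace Matrix

variable {n : Type*} [Fintype n] [DecidableEq n]

section L2OpNorm

open scoped MatrixOrder Norms.L2Operator

lemma sqrt_dotProduct_mulVec_self_le (P : Matrix n n ℝ) (x : n → ℝ) :
    √((P *ᵥ x) ⬝ᵥ (P *ᵥ x)) ≤ ‖P‖ * √(x ⬝ᵥ x) := by
  have hnorm (y : n → ℝ) : √(y ⬝ᵥ y) = ‖(EuclideanSpace.equiv n ℝ).symm y‖ := by
    simp [EuclideanSpace.norm_eq, sq, dotProduct]
  rw [hnorm, hnorm]
  exact P.l2_opNorm_mulVec _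

lemma algebraMap_le_of_posSemidef_sub {B : Matrix n n ℝ} {c : ℝ} (h : (B - c • 1).PosSemidef) :
    algebraMap ℝ (Matrix n n ℝ) c ≤ B := by
  rwa [Algebra.algebraMap_eq_smul_one, le_iff]

lemma l2_opNorm_inv_le {B : Matrix n n ℝ} {c : ℝ} (hc : 0 < c) (h : (B - c • 1).PosSemidef) :
    ‖B⁻¹‖ ≤ c⁻¹ := by
  rw [nonsing_inv_eq_ringInverse]
  exact norm_ringInverse_le_of_algebraMap_le hc (algebraMap_le_of_posSemidef_sub h)

lemma l2_opNorm_inv_sub_one_le {B : Matrix n n ℝ} {c : ℝ} (hc : 0 < c)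
    (h : (B - c • 1).PosSemidef) : ‖B⁻¹ - 1‖ ≤ max (c⁻¹ - 1) 1 := by
  rw [nonsing_inv_eq_ringInverse]
  exact norm_ringInverse_sub_one_le_of_algebraMap_le hc (algebraMap_le_of_posSemidef_sub h)

end L2OpNorm

lemma inv_mul_sub_mul_inv_add_one_mul {R : Type*} [CommRing R] {S A : Matrix n n R}
    (hS : IsUnit S.det) (hA : IsUnit (A + 1).det) :
    S⁻¹ * (S * S - A) * (A + 1)⁻¹ * S =
      (S * (A + 1)⁻¹ * S - 1) + (S * S)⁻¹ * (S * (A + 1)⁻¹ * S) := by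
  have hSS : S⁻¹ * S = 1 := nonsing_inv_mul S hS
  have hAA : (A + 1) * (A + 1)⁻¹ = 1 := mul_nonsing_inv _ hA
  rw [mul_inv_rev]
  linear_combination (norm := noncomm_ring) hSS * S * (A + 1)⁻¹ * S - S⁻¹ * hSS * (A + 1)⁻¹ * S
    - S⁻¹ * hAA * S - hSS

end Matrix

/-- Deterministic core of the `P_t` bound: if `V^{-1/2}(A + I)V^{-1/2} ⪰ (1/4)I` and
`λ_min(V) ≥ 4` (i.e. `V ⪰ 4 I`), then the spectral norm of
`P = V^{-1/2}(V - A)(A + I)⁻¹ V^{1/2}` is at most 5. -/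
theorem stmt_7 (d : ℕ) (A V : Matrix (Fin d) (Fin d) ℝ)
    (hA : A.PosSemidef) (hV : V.PosDef)
    (hlow : ((hV.posSemidef.sqrt)⁻¹ * (A + 1) * (hV.posSemidef.sqrt)⁻¹
        - (1/4 : ℝ) • (1 : Matrix (Fin d) (Fin d) ℝ)).PosSemidef)
    (hmin : (V - (4 : ℝ) • (1 : Matrix (Fin d) (Fin d) ℝ)).PosSemidef)
    (P : Matrix (Fin d) (Fin d) ℝ)
    (hP : P = (hV.posSemidef.sqrt)⁻¹ * (V - A) * (A + 1)⁻¹ * hV.posSemidef.sqrt) :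
    ∀ x : Fin d → ℝ, Real.sqrt ((P *ᵥ x) ⬝ᵥ (P *ᵥ x)) ≤ 5 * Real.sqrt (x ⬝ᵥ x) := by
  set S := hV.posSemidef.sqrt
  have hSS : S * S = V := hV.posSemidef.sqrt_mul_self
  have hS : IsUnit S.det := (IsUnit.mul_iff.mp (by
    rw [← det_mul, hSS]; exact (isUnit_iff_isUnit_det V).mp hV.isUnit)).1
  have hA1 : IsUnit (A + 1).det :=
    (isUnit_iff_isUnit_det _).mp (PosDef.posSemidef_add hA PosDef.one).isUnit
  set M := S * (A + 1)⁻¹ * S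
  have hM : (S⁻¹ * (A + 1) * S⁻¹)⁻¹ = M := by
    rw [Matrix.mul_inv_rev, Matrix.mul_inv_rev, nonsing_inv_nonsing_inv S hS, ← mul_assoc]
  have hPM : P = (M - 1) + V⁻¹ * M := by
    rw [hP, ← hSS]
    exact inv_mul_sub_mul_inv_add_one_mul hS hA1
  open scoped Matrix.Norms.L2Operator in
  have hPnorm : ‖P‖ ≤ 5 := by
    have hM4 : ‖M‖ ≤ 4 := hM ▸ (l2_opNorm_inv_le (by norm_num) hlow).trans (by norm_num)
    have hM1 : ‖M - 1‖ ≤ 3 :=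
      hM ▸ (l2_opNorm_inv_sub_one_le (by norm_num) hlow).trans (by norm_num)
    have hV4 : ‖V⁻¹‖ ≤ 4⁻¹ := l2_opNorm_inv_le (by norm_num) hmin
    calc ‖P‖ ≤ ‖M - 1‖ + ‖V⁻¹‖ * ‖M‖ := hPM ▸ norm_add_le_of_le le_rfl (norm_mul_le _ _)
      _ ≤ 3 + 4⁻¹ * 4 := by gcongr
      _ ≤ 5 := by norm_num
  intro x
  exact (sqrt_dotProduct_mulVec_self_le P x).trans (by gcongr)
end

section
/- Let x_1, …, x_T ∈ ℝ^d with ‖x_t‖₂² ≤ c for all t where c ≥ 1, and define W_0 = c·I_d, W_t = W_{t−1} + x_t x_tᵀ. Then ∑_{t=1}^T x_tᵀ W_{t−1}^{-1} x_t ≤ 2 log( det(W_T) / det(c·I_d) ) ≤ 2d log(T·c/(c·d) + 1). -/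
/-! The matrix determinant lemma gives `det W_t = det W_{t-1} (1 + q_t)` with
`q_t = x_tᵀ W_{t-1}⁻¹ x_t`. Since `W_{t-1} ≥ c I` and `‖x_t‖² ≤ c`, each `q_t ≤ 1`, where
`q ≤ 2 log (1 + q)`; summing telescopes to `2 log (det W_T / det W_0)`. The determinant of the
positive semidefinite `W_T` is the product of its eigenvalues, so AM–GM bounds it by
`(tr W_T / d)^d ≤ ((c d + T c) / d)^d`. -/

open Matrix Finset

theorem Real.le_two_mul_log_one_add {u : ℝ} (h0 : 0 ≤ u) (h2 : u ≤ 2) :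
    u ≤ 2 * Real.log (1 + u) := by
  have hlog := Real.le_log_one_add_of_nonneg h0
  have : u / 2 ≤ 2 * u / (u + 2) := by
    rw [div_le_div_iff₀ two_pos (by linarith)]
    nlinarith
  linarith

theorem Real.prod_le_sum_div_card_pow {ι : Type*} [Fintype ι] {z : ι → ℝ} (hz : ∀ i, 0 ≤ z i) :
    ∏ i, z i ≤ ((∑ i, z i) / Fintype.card ι) ^ Fintype.card ι := by
  rcases isEmpty_or_nonempty ι with hι | hι
  · simp
  have hprod : 0 ≤ ∏ i, z i := prod_nonneg fun i _ => hz i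
  have amgm := Real.geom_mean_le_arith_mean univ (fun _ => 1) z (fun _ _ => zero_le_one)
    (by simp [Fintype.card_pos]) (fun i _ => hz i)
  simp only [Real.rpow_one, sum_const, card_univ, nsmul_eq_mul, mul_one, one_mul] at amgm
  calc ∏ i, z i = ((∏ i, z i) ^ (Fintype.card ι : ℝ)⁻¹) ^ Fintype.card ι :=
        (Real.rpow_inv_natCast_pow hprod Fintype.card_ne_zero).symm
    _ ≤ _ := pow_le_pow_left₀ (by positivity) amgm _

namespace Matrix

variable {n : Type*} [DecidableEq n]

theorem posDef_of_posSemidef_sub_smul_one {c : ℝ} (hc : 0 < c) {W : Matrix n n ℝ}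
    (hW : (W - c • 1).PosSemidef) : W.PosDef := by
  have hcI : (c • 1 : Matrix n n ℝ).PosDef := by
    rw [smul_one_eq_diagonal]
    exact posDef_diagonal_iff.mpr fun _ => hc
  simpa using hcI.add_posSemidef hW

variable [Fintype n]

theorem det_add_vecMulVec {α : Type*} [CommRing α] {A : Matrix n n α} (hA : IsUnit A.det)
    (u v : n → α) : (A + vecMulVec u v).det = A.det * (1 + v ⬝ᵥ (A⁻¹ *ᵥ u)) := by
  rw [vecMulVec_eq Unit, det_add_replicateCol_mul_replicateRow hA, Matrix.mul_assoc,
    ← replicateCol_mulVec]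
  congr 1
  rw [det_unique]
  simp [replicateRow_mul_replicateCol_apply]

theorem PosSemidef.det_le_trace_div_card_pow {A : Matrix n n ℝ} (hA : A.PosSemidef) :
    A.det ≤ (A.trace / Fintype.card n) ^ Fintype.card n := by
  have hdet : A.det = ∏ i, hA.isHermitian.eigenvalues i := by
    simpa using hA.isHermitian.det_eq_prod_eigenvalues
  have htrace : A.trace = ∑ i, hA.isHermitian.eigenvalues i := by
    simpa using hA.isHermitian.trace_eq_sum_eigenvalues
  rw [hdet, htrace]
  exact Real.prod_le_sum_div_card_pow hA.eigenvalues_nonneg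

/-- With `y = W⁻¹ v`, the hypothesis gives `c (y ⬝ y) ≤ y ⬝ W y = v ⬝ y`, and expanding
`0 ≤ (v - c y) ⬝ (v - c y)` turns this into `c (v ⬝ y) ≤ v ⬝ v`. -/
theorem mul_dotProduct_inv_mulVec_le {c : ℝ} (hc : 0 < c) {W : Matrix n n ℝ}
    (hW : (W - c • 1).PosSemidef) (v : n → ℝ) : c * (v ⬝ᵥ (W⁻¹ *ᵥ v)) ≤ v ⬝ᵥ v := by
  set y := W⁻¹ *ᵥ v
  have hWy : W *ᵥ y = v := by
    have hdet := (posDef_of_posSemidef_sub_smul_one hc hW).det_pos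
    rw [mulVec_mulVec, mul_nonsing_inv _ hdet.ne'.isUnit, one_mulVec]
  have hlower : c * (y ⬝ᵥ y) ≤ v ⬝ᵥ y := by
    have h := hW.dotProduct_mulVec_nonneg y
    rw [star_trivial, sub_mulVec, dotProduct_sub, hWy, smul_mulVec, one_mulVec,
      dotProduct_smul, smul_eq_mul, dotProduct_comm] at h
    linarith
  have hsq : 0 ≤ (v - c • y) ⬝ᵥ (v - c • y) := sum_nonneg fun i _ => mul_self_nonneg _
  simp only [sub_dotProduct, dotProduct_sub, smul_dotProduct, dotProduct_smul, smul_eq_mul,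
    dotProduct_comm y v] at hsq
  nlinarith [mul_le_mul_of_nonneg_left hlower hc.le]

theorem PosSemidef.det_div_det_smul_one_le {A : Matrix n n ℝ} (hA : A.PosSemidef) {c τ : ℝ}
    (hc : 0 < c)
    (htr : A.trace ≤ c * Fintype.card n + τ * c) :
    A.det / (c • 1 : Matrix n n ℝ).det ≤ (τ * c / (c * Fintype.card n) + 1) ^ Fintype.card n := by
  set d := Fintype.card n
  rw [det_smul, det_one, mul_one, div_le_iff₀ (by positivity)]
  calc A.det ≤ (A.trace / d) ^ d := hA.det_le_trace_div_card_pow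
    _ ≤ ((c * d + τ * c) / d) ^ d := by
      have := hA.trace_nonneg
      gcongr
    _ = (τ * c / (c * d) + 1) ^ d * c ^ d := by
      rcases eq_or_ne d 0 with hd | hd
      · simp [hd]
      · rw [← mul_pow]
        field_simp
        ring

end Matrix

section EllipticalPotential

variable {n : Type*} [DecidableEq n] {c : ℝ} {x : ℕ → n → ℝ}
  {W : ℕ → Matrix n n ℝ}

theorem eq_smul_one_add_sum_vecMulVec (hW0 : W 0 = c • 1)
    (hWrec : ∀ t, W (t + 1) = W t + vecMulVec (x (t + 1)) (x (t + 1))) (t : ℕ) :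
    W t = c • 1 + ∑ s ∈ Icc 1 t, vecMulVec (x s) (x s) := by
  induction t with
  | zero => simp [hW0]
  | succ t ih => rw [hWrec, ih, sum_Icc_succ_top (Nat.le_add_left 1 t), add_assoc]

variable [Fintype n]

theorem posSemidef_sub_smul_one (hW0 : W 0 = c • 1)
    (hWrec : ∀ t, W (t + 1) = W t + vecMulVec (x (t + 1)) (x (t + 1))) (t : ℕ) :
    (W t - c • 1).PosSemidef := by
  rw [eq_smul_one_add_sum_vecMulVec hW0 hWrec, add_sub_cancel_left]
  exact posSemidef_sum _ fun s _ => by simpa using posSemidef_vecMulVec_self_star (x s)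

theorem trace_eq_mul_card_add_sum (hW0 : W 0 = c • 1)
    (hWrec : ∀ t, W (t + 1) = W t + vecMulVec (x (t + 1)) (x (t + 1))) (t : ℕ) :
    (W t).trace = c * Fintype.card n + ∑ s ∈ Icc 1 t, x s ⬝ᵥ x s := by
  simp [eq_smul_one_add_sum_vecMulVec hW0 hWrec t, trace_sum, vecMulVec_eq Unit,
    trace_replicateCol_mul_replicateRow]

/-- Each rank-one update multiplies `det W` by `1 + q` where `q ∈ [0, 1]` is the new term of the
sum, and `q ≤ 2 log (1 + q)` there. -/
theorem sum_dotProduct_inv_mulVec_le_two_mul_log_det_div (hW : ∀ t, (W t).PosDef)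
    (hWrec : ∀ t, W (t + 1) = W t + vecMulVec (x (t + 1)) (x (t + 1)))
    (hx : ∀ t, x (t + 1) ⬝ᵥ ((W t)⁻¹ *ᵥ x (t + 1)) ≤ 1) (T : ℕ) :
    ∑ t ∈ Icc 1 T, x t ⬝ᵥ ((W (t - 1))⁻¹ *ᵥ x t) ≤ 2 * Real.log ((W T).det / (W 0).det) := by
  induction T with
  | zero => simp
  | succ T ih =>
    set q := x (T + 1) ⬝ᵥ ((W T)⁻¹ *ᵥ x (T + 1))
    have hq : 0 ≤ q := by
      simpa using (hW T).inv.posSemidef.dotProduct_mulVec_nonneg (x (T + 1))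
    have hdet : (W (T + 1)).det / (W 0).det = (W T).det / (W 0).det * (1 + q) := by
      rw [hWrec, det_add_vecMulVec (hW T).det_pos.ne'.isUnit, mul_div_right_comm]
    rw [sum_Icc_succ_top (Nat.le_add_left 1 T), Nat.add_sub_cancel, hdet,
      Real.log_mul (div_pos (hW T).det_pos (hW 0).det_pos).ne' (by positivity)]
    linarith [Real.le_two_mul_log_one_add hq (by linarith [hx T])]

end EllipticalPotential

/-- Elliptical potential lemma with regularization scale c:
∑ xₜᵀ W_{t-1}⁻¹ xₜ ≤ 2 log(det W_T / det(cI)) ≤ 2d log(Tc/(cd) + 1). -/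
theorem stmt_16 (d T : ℕ) (c : ℝ) (hc : 1 ≤ c)
    (x : ℕ → (Fin d → ℝ)) (hx : ∀ t, x t ⬝ᵥ x t ≤ c)
    (W : ℕ → Matrix (Fin d) (Fin d) ℝ)
    (hW0 : W 0 = c • (1 : Matrix (Fin d) (Fin d) ℝ))
    (hWrec : ∀ t : ℕ, W (t + 1) = W t + vecMulVec (x (t + 1)) (x (t + 1))) :
    ∑ t ∈ Finset.Icc 1 T, x t ⬝ᵥ ((W (t - 1))⁻¹ *ᵥ x t)
        ≤ 2 * Real.log ((W T).det / (c • (1 : Matrix (Fin d) (Fin d) ℝ)).det) ∧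
    2 * Real.log ((W T).det / (c • (1 : Matrix (Fin d) (Fin d) ℝ)).det)
        ≤ 2 * d * Real.log ((T : ℝ) * c / (c * d) + 1) := by
  have hc0 : 0 < c := by linarith
  have hW := posSemidef_sub_smul_one hW0 hWrec
  have hWpd t := posDef_of_posSemidef_sub_smul_one hc0 (hW t)
  have hstep t : x (t + 1) ⬝ᵥ ((W t)⁻¹ *ᵥ x (t + 1)) ≤ 1 :=
    (mul_le_iff_le_one_right hc0).mp ((mul_dotProduct_inv_mulVec_le hc0 (hW t) _).trans (hx _))
  refine ⟨hW0 ▸ sum_dotProduct_inv_mulVec_le_two_mul_log_det_div hWpd hWrec hstep T, ?_⟩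
  have htr : (W T).trace ≤ c * d + T * c := by
    rw [trace_eq_mul_card_add_sum hW0 hWrec, Fintype.card_fin]
    have hsum := sum_le_card_nsmul (Icc 1 T) _ c fun t _ => hx t
    rw [Nat.card_Icc, Nat.add_sub_cancel, nsmul_eq_mul] at hsum
    linarith
  have hdet := (hWpd T).posSemidef.det_div_det_smul_one_le hc0 (by simpa using htr)
  have hpos : 0 < (W T).det / (c • (1 : Matrix (Fin d) (Fin d) ℝ)).det := by
    rw [det_smul, det_one, mul_one]
    exact div_pos (hWpd T).det_pos (by positivity)
  calc 2 * Real.log ((W T).det / (c • (1 : Matrix (Fin d) (Fin d) ℝ)).det)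
      ≤ 2 * Real.log (((T : ℝ) * c / (c * d) + 1) ^ d) := by
        gcongr
        simpa using hdet
    _ = 2 * d * Real.log ((T : ℝ) * c / (c * d) + 1) := by rw [Real.log_pow]; ring
end
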